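/- With c_i^n the Taylor coefficients at 0 of (z + 1/(z+2))^n, for every integer n ≥ 0 one has c_n^n = 1/2 + C(2n,n)/2^{2n+1}. -/

import Mathlib

/-!
Expanding `(x + 1/(x+2))^n` binomially and each `(x+2)^(-k)` as a negative binomial series gives
`c n = ∑ k, C(n,k) (-1/4)^k C(2k-1,k)`. Since `2 C(2k-1,k) = C(2k,k)` for `k ≥ 1`, this equals
`(1 + ∑ k, C(n,k) (-1/4)^k C(2k,k)) / 2`, and the last sum is `C(2n,n) / 4^n`: compare the
coefficients of `X^n` in `((X-1)^2 + 4X)^n = (X+1)^(2n)`. The coefficients `c i` are pinned down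
by the function because a power series converging on `(-2, 2)` is its Taylor series at `0`.
-/

open Finset Polynomial

section Series

variable {𝕜 : Type*} [NormedField 𝕜]

theorem hasSum_multichoose_mul_geometric (k : ℕ) {r : 𝕜} (hr : ‖r‖ < 1) :
    HasSum (fun j ↦ (k.multichoose j : 𝕜) * r ^ j) ((1 - r) ^ k)⁻¹ := by
  cases k with
  | zero =>
    convert hasSum_single (f := fun j ↦ ((0).multichoose j : 𝕜) * r ^ j) 0 fun j hj ↦ ?_
    · simp
    · obtain ⟨j, rfl⟩ := Nat.exists_eq_succ_of_ne_zero hj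
      simp [Nat.multichoose_zero_succ]
  | succ k =>
    convert hasSum_choose_mul_geometric_of_norm_lt_one k hr using 2 with j
    · rw [Nat.multichoose_eq, add_right_comm, Nat.add_sub_cancel, add_comm, Nat.choose_symm_add]
    · simp

theorem hasSum_inv_add_pow (k : ℕ) {a x : 𝕜} (hx : ‖x‖ < ‖a‖) :
    HasSum (fun j ↦ (a ^ k)⁻¹ * k.multichoose j * (-a⁻¹) ^ j * x ^ j) ((x + a) ^ k)⁻¹ := by
  have ha : a ≠ 0 := norm_pos_iff.mp ((norm_nonneg x).trans_lt hx)
  have hr : ‖-a⁻¹ * x‖ < 1 := by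
    rw [norm_mul, norm_neg, norm_inv, inv_mul_lt_one₀ (norm_pos_iff.mpr ha)]
    exact hx
  have hsum : ((x + a) ^ k)⁻¹ = (a ^ k)⁻¹ * ((1 - -a⁻¹ * x) ^ k)⁻¹ := by
    rw [← mul_inv, ← mul_pow]
    congr 2
    field_simp
    ring
  have hterm : (fun j ↦ (a ^ k)⁻¹ * k.multichoose j * (-a⁻¹) ^ j * x ^ j) =
      fun j ↦ (a ^ k)⁻¹ * (k.multichoose j * (-a⁻¹ * x) ^ j) := by
    ext j
    ring
  rw [hsum, hterm]
  exact (hasSum_multichoose_mul_geometric k hr).mul_left _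

theorem hasSum_ite_le_mul_pow {a : ℕ → 𝕜} {x s : 𝕜} (m : ℕ)
    (h : HasSum (fun j ↦ a j * x ^ j) s) :
    HasSum (fun i ↦ (if m ≤ i then a (i - m) else 0) * x ^ i) (x ^ m * s) := by
  rw [← hasSum_nat_add_iff' m,
    sum_eq_zero fun i hi ↦ by simp [Nat.not_le.mpr (mem_range.mp hi)], sub_zero]
  have hterm : (fun j ↦ (if m ≤ j + m then a (j + m - m) else 0) * x ^ (j + m)) =
      fun j ↦ x ^ m * (a j * x ^ j) := by
    ext j
    rw [if_pos (Nat.le_add_left m j), Nat.add_sub_cancel, pow_add]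
    ring
  rw [hterm]
  exact h.mul_left _

noncomputable def powAddInvCoeff (a : 𝕜) (n i : ℕ) : 𝕜 :=
  ∑ k ∈ range (n + 1), n.choose k *
    if n - k ≤ i then (a ^ k)⁻¹ * k.multichoose (i - (n - k)) * (-a⁻¹) ^ (i - (n - k)) else 0

theorem hasSum_powAddInvCoeff (a : 𝕜) (n : ℕ) {x : 𝕜} (hx : ‖x‖ < ‖a‖) :
    HasSum (fun i ↦ powAddInvCoeff a n i * x ^ i) ((x + 1 / (x + a)) ^ n) := by
  have hterm : ∀ k ∈ range (n + 1), HasSum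
      (fun i ↦ n.choose k * (if n - k ≤ i then (a ^ k)⁻¹ * k.multichoose (i - (n - k)) *
        (-a⁻¹) ^ (i - (n - k)) else 0) * x ^ i)
      (n.choose k * (x ^ (n - k) * ((x + a) ^ k)⁻¹)) := fun k _ ↦ by
    simpa only [mul_assoc] using
      (hasSum_ite_le_mul_pow (n - k) (hasSum_inv_add_pow k hx)).mul_left (n.choose k : 𝕜)
  have hbinom : (x + 1 / (x + a)) ^ n =
      ∑ k ∈ range (n + 1), n.choose k * (x ^ (n - k) * ((x + a) ^ k)⁻¹) := by
    rw [add_comm, add_pow]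
    refine sum_congr rfl fun k _ ↦ ?_
    rw [one_div, inv_pow]
    ring
  rw [hbinom]
  simpa only [powAddInvCoeff, sum_mul] using hasSum_sum hterm

theorem powAddInvCoeff_self (a : 𝕜) (n : ℕ) :
    powAddInvCoeff a n n =
      ∑ k ∈ range (n + 1), n.choose k * (-(a ^ 2)⁻¹) ^ k * k.multichoose k := by
  refine sum_congr rfl fun k hk ↦ ?_
  rw [if_pos (Nat.sub_le n k), Nat.sub_sub_self (Nat.lt_succ_iff.mp (mem_range.mp hk))]
  ring

end Series

theorem hasFPowerSeriesOnBall_ofScalars_of_hasSum {f : ℝ → ℝ} {c : ℕ → ℝ} {r : ℝ} (hr : 0 < r)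
    (hc : ∀ x, |x| < r → HasSum (fun i ↦ c i * x ^ i) (f x)) :
    HasFPowerSeriesOnBall f (.ofScalars ℝ c) 0 (ENNReal.ofReal r) where
  r_le := by
    refine ENNReal.le_of_forall_nnreal_lt fun ρ hρ ↦ ?_
    have hρ : |(ρ : ℝ)| < r := by
      rw [NNReal.abs_eq]
      exact ENNReal.coe_lt_ofReal.mp hρ
    refine FormalMultilinearSeries.le_radius_of_tendsto _ (l := 0) ?_
    simpa [FormalMultilinearSeries.ofScalars_norm, abs_mul] using
      (hc ρ hρ).summable.tendsto_atTop_zero.abs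
  r_pos := by simpa using hr
  hasSum {y} hy := by
    have hy : |y| < r := by simpa using hy
    simpa [FormalMultilinearSeries.ofScalars_apply_eq, mul_comm] using hc y hy

theorem coeff_eq_of_hasSum {f : ℝ → ℝ} {a b : ℕ → ℝ} {r : ℝ} (hr : 0 < r)
    (ha : ∀ x, |x| < r → HasSum (fun i ↦ a i * x ^ i) (f x))
    (hb : ∀ x, |x| < r → HasSum (fun i ↦ b i * x ^ i) (f x)) : a = b :=
  FormalMultilinearSeries.ofScalars_series_injective ℝ (E := ℝ)
    ((hasFPowerSeriesOnBall_ofScalars_of_hasSum hr ha).hasFPowerSeriesAt.eq_formalMultilinearSeries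
      (hasFPowerSeriesOnBall_ofScalars_of_hasSum hr hb).hasFPowerSeriesAt)

theorem sum_choose_mul_centralBinom_mul_four_pow (n : ℕ) :
    ∑ k ∈ range (n + 1), (n.choose k : ℝ) * (-1) ^ k * k.centralBinom * 4 ^ (n - k) =
      n.centralBinom := by
  have hpoly : ((X + C (-1 : ℝ)) ^ 2 + C 4 * X) ^ n = (X + C 1) ^ (2 * n) := by
    rw [pow_mul]
    congr 1
    simp only [map_neg, map_one, map_ofNat]
    ring
  have hcoeff := congrArg (coeff · n) hpoly
  rw [coeff_X_add_C_pow, one_pow, one_mul, add_pow ((X + C (-1 : ℝ)) ^ 2), finsetSum_coeff]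
    at hcoeff
  rw [Nat.centralBinom_eq_two_mul_choose, ← hcoeff]
  refine sum_congr rfl fun k hk ↦ ?_
  have hkn : k ≤ n := Nat.lt_succ_iff.mp (mem_range.mp hk)
  have hterm : ((X + C (-1 : ℝ)) ^ 2) ^ k * (C 4 * X) ^ (n - k) * (n.choose k : ℝ[X]) =
      C ((4 : ℝ) ^ (n - k) * n.choose k) * ((X + C (-1)) ^ (2 * k) * X ^ (n - k)) := by
    simp only [map_mul, map_pow, map_natCast, map_ofNat, pow_mul]
    ring
  rw [hterm, coeff_C_mul, coeff_mul_X_pow', if_pos (Nat.sub_le n k), Nat.sub_sub_self hkn,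
    coeff_X_add_C_pow, Nat.centralBinom_eq_two_mul_choose, two_mul, Nat.add_sub_cancel]
  ring

theorem sum_choose_mul_centralBinom_div_four_pow (n : ℕ) :
    ∑ k ∈ range (n + 1), (n.choose k : ℝ) * (-4⁻¹) ^ k * k.centralBinom =
      n.centralBinom / 4 ^ n := by
  rw [eq_div_iff (by positivity), sum_mul, ← sum_choose_mul_centralBinom_mul_four_pow]
  refine sum_congr rfl fun k hk ↦ ?_
  rw [← pow_sub_mul_pow 4 (Nat.lt_succ_iff.mp (mem_range.mp hk)), neg_pow, inv_pow]
  field_simp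

theorem two_mul_multichoose_self (k : ℕ) :
    2 * k.multichoose k = k.centralBinom + if k = 0 then 1 else 0 := by
  cases k with
  | zero => simp
  | succ k =>
    rw [if_neg k.succ_ne_zero, add_zero, Nat.multichoose_eq, Nat.centralBinom_eq_two_mul_choose,
      show k + 1 + (k + 1) - 1 = k + 1 + k by omega, two_mul (k + 1), ← add_assoc,
      Nat.choose_succ_succ', Nat.choose_symm_add]
    ring

theorem sum_choose_mul_multichoose_self (n : ℕ) :
    ∑ k ∈ range (n + 1), (n.choose k : ℝ) * (-4⁻¹) ^ k * k.multichoose k =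
      (1 + n.centralBinom / 4 ^ n) / 2 := by
  have hmc (k : ℕ) : (k.multichoose k : ℝ) = (k.centralBinom + if k = 0 then 1 else 0) / 2 := by
    rw [eq_div_iff two_ne_zero, mul_comm]
    exact_mod_cast two_mul_multichoose_self k
  simp_rw [hmc, mul_div_assoc', ← sum_div, mul_add, sum_add_distrib,
    sum_choose_mul_centralBinom_div_four_pow]
  simp [add_comm]

theorem stmt_17 (n : ℕ) (c : ℕ → ℝ)
    (hc : ∀ x : ℝ, |x| < 2 → HasSum (fun i : ℕ => c i * x ^ i) ((x + 1 / (x + 2)) ^ n)) :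
    c n = 1 / 2 + ((2 * n).choose n : ℝ) / 2 ^ (2 * n + 1) := by
  have hcoeff : c = powAddInvCoeff 2 n :=
    coeff_eq_of_hasSum two_pos hc fun x hx ↦ hasSum_powAddInvCoeff 2 n (by simpa using hx)
  rw [hcoeff, powAddInvCoeff_self, show -((2 : ℝ) ^ 2)⁻¹ = -4⁻¹ by norm_num,
    sum_choose_mul_multichoose_self, Nat.centralBinom_eq_two_mul_choose, pow_succ, pow_mul]
  ring
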